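/- arXiv:1204.2935 — 5 statements merged into one kernel-verified Lean document; each statement's English description precedes it below -/
import Mathlib

section
/- Every Rest Bounded Variation Sequence is a Mean Rest Bounded Variation Sequence: if a sequence (c_k) of nonnegative reals tending to zero satisfies ∑_{k=m}^∞ |c_k - c_{k+1}| ≤ K·c_m for all positive integers m (for some constant K), then there exists a constant K' such that ∑_{k=m}^∞ |c_k - c_{k+1}| ≤ K'/(m+1) · ∑_{k=⌈m/2⌉}^{m} c_k for all positive integers m. -/
/-!
Write `V m = ∑' k, |c (m + k) - c (m + k + 1)|`. For `k ≤ m` the triangle inequality gives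
`c m ≤ c k + V k ≤ (1 + K) c k`, so `c m` is dominated by every term of the window
`⌈m/2⌉ ≤ k ≤ m`. That window has at least `(m + 1) / 2` terms, hence
`V m ≤ K c m ≤ 2 K (1 + K) / (m + 1) · ∑_{⌈m/2⌉ ≤ k ≤ m} c k`.
-/

open Finset Filter

theorem summable_nat_add_left_iff {G : Type*} [AddCommGroup G] [TopologicalSpace G]
    [IsTopologicalAddGroup G] {f : ℕ → G} (k : ℕ) :
    (Summable fun j => f (k + j)) ↔ Summable f := by
  simpa only [add_comm] using summable_nat_add_iff k

theorem dist_le_tsum_dist_succ {α : Type*} [PseudoMetricSpace α] (f : ℕ → α) {k m : ℕ}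
    (hkm : k ≤ m) (hs : Summable fun j => dist (f (k + j)) (f (k + j + 1))) :
    dist (f k) (f m) ≤ ∑' j, dist (f (k + j)) (f (k + j + 1)) := by
  obtain ⟨n, rfl⟩ := Nat.exists_eq_add_of_le hkm
  calc dist (f k) (f (k + n)) ≤ ∑ i ∈ range n, dist (f (k + i)) (f (k + i + 1)) :=
        dist_le_range_sum_dist (fun i => f (k + i)) n
    _ ≤ _ := hs.sum_le_tsum _ fun _ _ => dist_nonneg

theorem le_one_add_mul_of_tsum_abs_sub_le {c : ℕ → ℝ} {K : ℝ} {k m : ℕ} (hkm : k ≤ m)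
    (hs : Summable fun j => |c (k + j) - c (k + j + 1)|)
    (hK : ∑' j, |c (k + j) - c (k + j + 1)| ≤ K * c k) :
    c m ≤ (1 + K) * c k := by
  have hdist : |c k - c m| ≤ ∑' j, |c (k + j) - c (k + j + 1)| := by
    simpa only [Real.dist_eq] using dist_le_tsum_dist_succ c hkm (by simpa only [Real.dist_eq])
  linarith [neg_abs_le (c k - c m)]

theorem le_mul_sum_Icc_half {c : ℕ → ℝ} {A : ℝ} {m : ℕ} (hm : 0 ≤ c m)
    (h : ∀ k ∈ Icc ((m + 1) / 2) m, c m ≤ A * c k) :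
    c m ≤ 2 * A / (m + 1) * ∑ k ∈ Icc ((m + 1) / 2) m, c k := by
  have hcard : (m + 1 : ℝ) ≤ 2 * #(Icc ((m + 1) / 2) m) := by
    rw [Nat.card_Icc]
    exact_mod_cast (by omega : m + 1 ≤ 2 * (m + 1 - (m + 1) / 2))
  have hsum : #(Icc ((m + 1) / 2) m) * c m ≤ A * ∑ k ∈ Icc ((m + 1) / 2) m, c k := by
    rw [← nsmul_eq_mul, ← sum_const, mul_sum]
    exact sum_le_sum h
  rw [div_mul_eq_mul_div, le_div_iff₀ (by positivity)]
  nlinarith [mul_le_mul_of_nonneg_right hcard hm]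

theorem rbvs_subset_mrbvs_general (c : ℕ → ℝ) (hpos : ∀ k, 0 ≤ c k) (K : ℝ)
    (hRBV : ∀ m : ℕ, 1 ≤ m → ∑' k : ℕ, |c (m + k) - c (m + k + 1)| ≤ K * c m) :
    ∃ K' : ℝ, ∀ m : ℕ, 1 ≤ m →
      ∑' k : ℕ, |c (m + k) - c (m + k + 1)| ≤
        K' / (m + 1) * ∑ k ∈ Finset.Icc ((m + 1) / 2) m, c k := by
  set K₀ := max K 0
  have hK₀ : 0 ≤ K₀ := le_max_right K 0
  have hRBV₀ : ∀ m, 1 ≤ m → ∑' k : ℕ, |c (m + k) - c (m + k + 1)| ≤ K₀ * c m := fun m hm =>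
    (hRBV m hm).trans (mul_le_mul_of_nonneg_right (le_max_left K 0) (hpos m))
  refine ⟨2 * K₀ * (1 + K₀), fun m hm => ?_⟩
  by_cases hs : Summable fun j => |c (m + j) - c (m + j + 1)|
  · have hmean : c m ≤ 2 * (1 + K₀) / (m + 1) * ∑ k ∈ Icc ((m + 1) / 2) m, c k := by
      have hg : Summable fun j => |c j - c (j + 1)| := (summable_nat_add_left_iff m).mp hs
      refine le_mul_sum_Icc_half (hpos m) fun k hk => ?_
      rw [mem_Icc] at hk
      exact le_one_add_mul_of_tsum_abs_sub_le hk.2 ((summable_nat_add_left_iff k).mpr hg)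
        (hRBV₀ k (by omega))
    calc ∑' k : ℕ, |c (m + k) - c (m + k + 1)| ≤ K₀ * c m := hRBV₀ m hm
      _ ≤ K₀ * (2 * (1 + K₀) / (m + 1) * ∑ k ∈ Icc ((m + 1) / 2) m, c k) :=
        mul_le_mul_of_nonneg_left hmean hK₀
      _ = _ := by ring
  · rw [tsum_eq_zero_of_not_summable hs]
    exact mul_nonneg (by positivity) (sum_nonneg fun k _ => hpos k)

/-- Every Rest Bounded Variation Sequence is a Mean Rest Bounded Variation Sequence. -/
theorem rbvs_subset_mrbvs (c : ℕ → ℝ) (hpos : ∀ k, 0 ≤ c k)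
    (hlim : Tendsto c atTop (nhds 0)) (K : ℝ)
    (hRBV : ∀ m : ℕ, 1 ≤ m → ∑' k : ℕ, |c (m + k) - c (m + k + 1)| ≤ K * c m) :
    ∃ K' : ℝ, ∀ m : ℕ, 1 ≤ m →
      ∑' k : ℕ, |c (m + k) - c (m + k + 1)| ≤
        K' / (m + 1) * ∑ k ∈ Finset.Icc ((m + 1) / 2) m, c k :=
  rbvs_subset_mrbvs_general c hpos K hRBV
end

section
/- Every Head Bounded Variation Sequence is a Mean Head Bounded Variation Sequence: if a finite sequence (c_k)_{k=0}^n of nonnegative reals satisfies ∑_{k=0}^{m-1} |c_k - c_{k+1}| ≤ K·c_m for all 1 ≤ m ≤ n, then there is a constant K' with ∑_{k=0}^{n-m-1} |c_k - c_{k+1}| ≤ K'/(m+1) · ∑_{k=n-m}^n c_k for all positive integers m < n. -/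
open Finset

/-!
The head variation `∑ k < m, |c k - c (k + 1)|` is monotone in `m`, so for every index `j` of the
window `[n - m, n]` the HBVS bound at `j` gives `V (n - m) ≤ V j ≤ K * c j`. Averaging these
`m + 1` inequalities over the window shows that `K' = K` works.
-/

theorem monotone_sum_range_abs_sub (c : ℕ → ℝ) :
    Monotone fun m ↦ ∑ k ∈ range m, |c k - c (k + 1)| :=
  (sum_mono_set_of_nonneg fun _ ↦ abs_nonneg _).comp range_mono

theorem succ_mul_sum_range_abs_sub_le_mul_sum_Icc {n m : ℕ} (c : ℕ → ℝ) (K : ℝ)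
    (hHBV : ∀ m : ℕ, 1 ≤ m → m ≤ n →
      ∑ k ∈ range m, |c k - c (k + 1)| ≤ K * c m) (hmn : m < n) :
    (m + 1 : ℝ) * ∑ k ∈ range (n - m), |c k - c (k + 1)| ≤ K * ∑ k ∈ Icc (n - m) n, c k := by
  have hwindow : ∀ j ∈ Icc (n - m) n, ∑ k ∈ range (n - m), |c k - c (k + 1)| ≤ K * c j := by
    intro j hj
    obtain ⟨hlo, hhi⟩ := mem_Icc.1 hj
    exact (monotone_sum_range_abs_sub c hlo).trans (hHBV j (by omega) hhi)
  calc (m + 1 : ℝ) * ∑ k ∈ range (n - m), |c k - c (k + 1)|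
      = #(Icc (n - m) n) • ∑ k ∈ range (n - m), |c k - c (k + 1)| := by
        rw [Nat.card_Icc, nsmul_eq_mul, show n + 1 - (n - m) = m + 1 by omega]
        push_cast
        rfl
    _ ≤ ∑ j ∈ Icc (n - m) n, K * c j := card_nsmul_le_sum _ _ _ hwindow
    _ = K * ∑ k ∈ Icc (n - m) n, c k := (mul_sum _ _ _).symm

theorem hbvs_subset_mhbvs_general (n : ℕ) (c : ℕ → ℝ) (K : ℝ)
    (hHBV : ∀ m : ℕ, 1 ≤ m → m ≤ n →
      ∑ k ∈ Finset.range m, |c k - c (k + 1)| ≤ K * c m) :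
    ∃ K' : ℝ, ∀ m : ℕ, 0 < m → m < n →
      ∑ k ∈ Finset.range (n - m), |c k - c (k + 1)| ≤
        K' / (m + 1) * ∑ k ∈ Finset.Icc (n - m) n, c k := by
  refine ⟨K, fun m _ hmn ↦ ?_⟩
  rw [div_mul_eq_mul_div, le_div_iff₀ (by positivity), mul_comm]
  exact succ_mul_sum_range_abs_sub_le_mul_sum_Icc c K hHBV hmn

/-- Every Head Bounded Variation Sequence is a Mean Head Bounded Variation Sequence. -/
theorem hbvs_subset_mhbvs (n : ℕ) (c : ℕ → ℝ) (hpos : ∀ k ≤ n, 0 ≤ c k) (K : ℝ)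
    (hHBV : ∀ m : ℕ, 1 ≤ m → m ≤ n →
      ∑ k ∈ Finset.range m, |c k - c (k + 1)| ≤ K * c m) :
    ∃ K' : ℝ, ∀ m : ℕ, 0 < m → m < n →
      ∑ k ∈ Finset.range (n - m), |c k - c (k + 1)| ≤
        K' / (m + 1) * ∑ k ∈ Finset.Icc (n - m) n, c k :=
  hbvs_subset_mhbvs_general n c K hHBV
end

section
/- For nonnegative reals a_0, ..., a_n, any real t, and any 0 ≤ τ ≤ n, the following partial summation estimate holds: |∑_{k=0}^n a_k sin((2k+1)t/2) sin(t/2)| ≤ |t| ∑_{k=0}^τ a_k + ∑_{k=τ}^{n-1} |a_k - a_{k+1}| + a_n, provided τ ≥ 1. -/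
/-!
Since `2 sin((2k+1)t/2) sin(t/2) = cos(kt) - cos((k+1)t)`, the terms with `k ≤ τ` are bounded
termwise by `|sin(t/2)| ≤ |t|/2`, while the tail `m ≤ k ≤ n`, `m = τ + 1`, is a sum
`∑ a_k (c_k - c_{k+1})` with `|c_k| ≤ 1`. Writing `a_k = a_n + ∑_{k ≤ j < n} (a_j - a_{j+1})`
(summation by parts) turns the tail into `a_n (c_m - c_{n+1}) + ∑_j (a_j - a_{j+1}) (c_m - c_{j+1})`,
and every `|c_m - c_i| ≤ 2`.
-/

open Finset Real

theorem sum_Ico_mul_sub_succ_by_parts {R : Type*} [CommRing R] (a c : ℕ → R) {m n : ℕ}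
    (hmn : m ≤ n) :
    ∑ k ∈ Ico m (n + 1), a k * (c k - c (k + 1)) =
      a n * (c m - c (n + 1)) + ∑ k ∈ Ico m n, (a k - a (k + 1)) * (c m - c (k + 1)) := by
  induction n, hmn using Nat.le_induction with
  | base => simp
  | succ n hmn ih =>
    rw [sum_Ico_succ_top (by omega), ih, sum_Ico_succ_top hmn]
    ring

theorem abs_sum_Ico_mul_sub_succ_le (a c : ℕ → ℝ) {C : ℝ} (hc : ∀ k, |c k| ≤ C) (m n : ℕ) :
    |∑ k ∈ Ico m (n + 1), a k * (c k - c (k + 1))| ≤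
      2 * C * (∑ k ∈ Ico m n, |a k - a (k + 1)| + |a n|) := by
  have hc_sub : ∀ i j, |c i - c j| ≤ 2 * C := fun i j =>
    (abs_sub _ _).trans (by linarith [hc i, hc j])
  rcases lt_or_ge n m with hnm | hmn
  · rw [Ico_eq_empty (by omega), sum_empty, abs_zero]
    have hC : 0 ≤ C := (abs_nonneg _).trans (hc 0)
    exact mul_nonneg (by linarith) (add_nonneg (sum_nonneg fun _ _ => abs_nonneg _) (abs_nonneg _))
  rw [sum_Ico_mul_sub_succ_by_parts a c hmn]
  calc _ ≤ |a n * (c m - c (n + 1))| +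
          ∑ k ∈ Ico m n, |(a k - a (k + 1)) * (c m - c (k + 1))| :=
        (abs_add_le _ _).trans (add_le_add_right (abs_sum_le_sum_abs _ _) _)
    _ ≤ |a n| * (2 * C) + ∑ k ∈ Ico m n, |a k - a (k + 1)| * (2 * C) := by
        simp only [abs_mul]
        gcongr <;> exact hc_sub _ _
    _ = _ := by rw [← sum_mul]; ring

theorem sin_two_mul_add_one_mul_div_two_mul_sin_half (x t : ℝ) :
    sin ((2 * x + 1) * t / 2) * sin (t / 2) = (cos (x * t) - cos ((x + 1) * t)) / 2 := by
  rw [cos_sub_cos, show (x * t + (x + 1) * t) / 2 = (2 * x + 1) * t / 2 by ring,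
    show (x * t - (x + 1) * t) / 2 = -(t / 2) by ring, sin_neg]
  ring

theorem abs_sin_mul_sin_half_le (x t : ℝ) : |sin x * sin (t / 2)| ≤ |t| / 2 := by
  rw [abs_mul, ← abs_two, ← abs_div, abs_two, ← one_mul |t / 2|]
  exact mul_le_mul (abs_sin_le_one x) abs_sin_le_abs (abs_nonneg _) zero_le_one

theorem abel_summation_sin_estimate_general (n τ : ℕ) (a : ℕ → ℝ) (hpos : ∀ k ≤ n, 0 ≤ a k)
    (t : ℝ) (hτn : τ ≤ n) :
    |∑ k ∈ Finset.range (n + 1), a k * Real.sin ((2 * k + 1) * t / 2) * Real.sin (t / 2)| ≤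
      |t| * ∑ k ∈ Finset.range (τ + 1), a k +
        ∑ k ∈ Finset.Ico τ n, |a k - a (k + 1)| + a n := by
  rw [← sum_range_add_sum_Ico _ (by omega : τ + 1 ≤ n + 1)]
  have head : |∑ k ∈ range (τ + 1), a k * sin ((2 * k + 1) * t / 2) * sin (t / 2)| ≤
      |t| * ∑ k ∈ range (τ + 1), a k := by
    rw [mul_sum]
    refine (abs_sum_le_sum_abs _ _).trans (sum_le_sum fun k hk => ?_)
    have ha : 0 ≤ a k := hpos k (by grind)
    rw [mul_assoc, abs_mul, abs_of_nonneg ha, mul_comm |t|]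
    refine mul_le_mul_of_nonneg_left ?_ ha
    linarith [abs_sin_mul_sin_half_le ((2 * k + 1) * t / 2) t, abs_nonneg t]
  have tail : |∑ k ∈ Ico (τ + 1) (n + 1), a k * sin ((2 * k + 1) * t / 2) * sin (t / 2)| ≤
      ∑ k ∈ Ico τ n, |a k - a (k + 1)| + a n := by
    have abel := abs_sum_Ico_mul_sub_succ_le a (fun k : ℕ => cos (k * t))
      (fun _ => abs_cos_le_one _) (τ + 1) n
    have shrink : ∑ k ∈ Ico (τ + 1) n, |a k - a (k + 1)| ≤ ∑ k ∈ Ico τ n, |a k - a (k + 1)| :=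
      sum_le_sum_of_subset_of_nonneg (Ico_subset_Ico (by omega) le_rfl)
        fun _ _ _ => abs_nonneg _
    simp only [mul_assoc, sin_two_mul_add_one_mul_div_two_mul_sin_half, mul_div_assoc',
      ← sum_div, abs_div, abs_two]
    push_cast at abel
    rw [abs_of_nonneg (hpos n le_rfl)] at abel
    linarith
  exact (abs_add_le _ _).trans (by linarith)

/-- Partial summation estimate:
`|∑_{k=0}^n a_k sin((2k+1)t/2) sin(t/2)| ≤ |t| ∑_{k=0}^τ a_k + ∑_{k=τ}^{n-1} |a_k - a_{k+1}| + a_n`. -/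
theorem abel_summation_sin_estimate (n τ : ℕ) (a : ℕ → ℝ) (hpos : ∀ k ≤ n, 0 ≤ a k)
    (t : ℝ) (hτ1 : 1 ≤ τ) (hτn : τ ≤ n) :
    |∑ k ∈ Finset.range (n + 1), a k * Real.sin ((2 * k + 1) * t / 2) * Real.sin (t / 2)| ≤
      |t| * ∑ k ∈ Finset.range (τ + 1), a k +
        ∑ k ∈ Finset.Ico τ n, |a k - a (k + 1)| + a n :=
  abel_summation_sin_estimate_general n τ a hpos t hτn
end

section
/- Let 2 ≤ n, let 2π/n ≤ t ≤ π, set τ = ⌊π/t⌋, and let (a_{n,k})_{k=0}^n be a nonnegative sequence belonging to MRBVS with uniform constant K, i.e. ∑_{k=m}^{n-1} |a_{n,k} - a_{n,k+1}| ≤ K/(m+1) ∑_{m/2 ≤ k ≤ m} a_{n,k} for all 0 ≤ m < n. Then there exists a constant C (depending only on K) such that |∑_{k=0}^n a_{n,k} D_k(t)| ≤ C · t^{-1} · ∑_{k=0}^τ a_{n,k}. -/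
/-!
Multiplying the Dirichlet kernel by `2 sin (t/2)` telescopes, so `|D_k(t)| ≤ k + 1/2` and every
block sum `∑_{j=m}^{k} D_j(t)` is at most `π² / (2t²)` in absolute value. Split the sum at
`τ = ⌊π/t⌋`: the head is at most `(τ + 1/2) A_{n,τ} = O(A_{n,τ}/t)`, and Abel summation bounds the
tail by the variation of `a` beyond `τ` plus `a_n`, times `π² / (2t²)`. The MRBVS condition,
applied at `m ≈ τ/2`, makes that variation and `a_n` of size `O(A_{n,τ}/τ) = O(t A_{n,τ})`.
-/

open Finset Real

noncomputable def dirichletKernel (k : ℕ) (t : ℝ) : ℝ :=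
  1 / 2 + ∑ ν ∈ Icc 1 k, cos (ν * t)

/-- The MRBVS condition on the row `a_{n,0}, …, a_{n,n}` with constant `K`; note
`(m + 1) / 2 = ⌈m / 2⌉`. -/
def IsMRBVS (K : ℝ) (n : ℕ) (a : ℕ → ℝ) : Prop :=
  ∀ m < n, ∑ k ∈ Ico m n, |a k - a (k + 1)| ≤ K / (m + 1) * ∑ k ∈ Icc ((m + 1) / 2) m, a k

section Dirichlet

theorem two_mul_sin_half_mul_dirichletKernel (k : ℕ) (t : ℝ) :
    2 * sin (t / 2) * dirichletKernel k t = sin ((2 * k + 1) * (t / 2)) := by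
  induction k with
  | zero => simp [dirichletKernel]; ring
  | succ k ih =>
    rw [dirichletKernel, sum_Icc_succ_top (by omega)] at *
    push_cast
    have e₁ : (2 * ((k : ℝ) + 1) + 1) * (t / 2) = (k + 1) * t + t / 2 := by ring
    have e₂ : (2 * (k : ℝ) + 1) * (t / 2) = (k + 1) * t - t / 2 := by ring
    rw [e₁, sin_add]
    rw [e₂, sin_sub] at ih
    linear_combination ih

theorem two_mul_sin_half_mul_sum_range_sin (N : ℕ) (t : ℝ) :
    2 * sin (t / 2) * ∑ j ∈ range N, sin ((2 * j + 1) * (t / 2)) = 1 - cos (N * t) := by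
  induction N with
  | zero => simp
  | succ N ih =>
    rw [sum_range_succ, mul_add, ih]
    push_cast
    have e₁ : (N : ℝ) * t = (2 * N + 1) * (t / 2) - t / 2 := by ring
    have e₂ : ((N : ℝ) + 1) * t = (2 * N + 1) * (t / 2) + t / 2 := by ring
    rw [e₁, e₂, cos_sub, cos_add]
    ring

theorem sq_two_mul_sin_half_mul_sum_Icc_dirichletKernel {m k : ℕ} (hmk : m ≤ k) (t : ℝ) :
    (2 * sin (t / 2)) ^ 2 * ∑ j ∈ Icc m k, dirichletKernel j t =
      cos (m * t) - cos ((k + 1) * t) := by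
  have hsin : 2 * sin (t / 2) * ∑ j ∈ Icc m k, dirichletKernel j t =
      ∑ j ∈ Icc m k, sin ((2 * j + 1) * (t / 2)) := by
    rw [mul_sum]
    exact sum_congr rfl fun j _ => two_mul_sin_half_mul_dirichletKernel j t
  rw [sq, mul_assoc, hsin, ← Ico_add_one_right_eq_Icc, sum_Ico_eq_sub _ (by omega), mul_sub,
    two_mul_sin_half_mul_sum_range_sin, two_mul_sin_half_mul_sum_range_sin]
  push_cast
  ring

theorem abs_dirichletKernel_le (k : ℕ) (t : ℝ) : |dirichletKernel k t| ≤ 1 / 2 + k := by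
  calc |dirichletKernel k t| ≤ |1 / 2| + ∑ ν ∈ Icc 1 k, |cos (ν * t)| :=
        (abs_add_le _ _).trans (by gcongr; exact abs_sum_le_sum_abs _ _)
    _ ≤ 1 / 2 + ∑ ν ∈ Icc 1 k, (1 : ℝ) := by
        rw [abs_of_pos one_half_pos]
        gcongr with ν
        exact abs_cos_le_one _
    _ = 1 / 2 + k := by simp

theorem abs_sum_Icc_dirichletKernel_le {t : ℝ} (ht₀ : 0 < t) (htπ : t ≤ π) {m k : ℕ}
    (hmk : m ≤ k) : |∑ j ∈ Icc m k, dirichletKernel j t| ≤ π ^ 2 / (2 * t ^ 2) := by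
  -- Jordan's inequality `sin (t/2) ≥ t/π`.
  have hsin : 2 * (t / π) ≤ 2 * sin (t / 2) := by
    have := mul_le_sin (x := t / 2) (by linarith) (by linarith)
    linarith [show 2 / π * (t / 2) = t / π by ring]
  have hsq : (2 * (t / π)) ^ 2 ≤ (2 * sin (t / 2)) ^ 2 := by
    gcongr
  have hcos : (2 * sin (t / 2)) ^ 2 * |∑ j ∈ Icc m k, dirichletKernel j t| ≤ 2 := by
    rw [← abs_of_nonneg (sq_nonneg (2 * sin (t / 2))), ← abs_mul,
      sq_two_mul_sin_half_mul_sum_Icc_dirichletKernel hmk]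
    have := abs_cos_le_one (m * t)
    have := abs_cos_le_one ((k + 1) * t)
    exact (abs_sub _ _).trans (by linarith)
  rw [show π ^ 2 / (2 * t ^ 2) = 2 / (2 * (t / π)) ^ 2 by field_simp, le_div_iff₀ (by positivity),
    mul_comm]
  exact (mul_le_mul_of_nonneg_right hsq (abs_nonneg _)).trans hcos

theorem abs_sum_range_mul_dirichletKernel_le {a : ℕ → ℝ} {τ : ℕ} (ha : ∀ k ≤ τ, 0 ≤ a k)
    (t : ℝ) :
    |∑ k ∈ range (τ + 1), a k * dirichletKernel k t| ≤ (1 / 2 + τ) * ∑ k ∈ range (τ + 1), a k := by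
  rw [mul_sum]
  refine (abs_sum_le_sum_abs _ _).trans (sum_le_sum fun k hk => ?_)
  have hk : k ≤ τ := Nat.lt_succ_iff.mp (mem_range.mp hk)
  rw [abs_mul, abs_of_nonneg (ha k hk), mul_comm]
  gcongr
  · exact ha k hk
  · exact (abs_dirichletKernel_le k t).trans (by gcongr)

end Dirichlet

section Variation

theorem sum_Icc_mul_eq_sum_Ico_sub_mul_add (a b : ℕ → ℝ) {m n : ℕ} (hmn : m ≤ n) :
    ∑ k ∈ Icc m n, a k * b k =
      ∑ k ∈ Ico m n, (a k - a (k + 1)) * ∑ j ∈ Icc m k, b j + a n * ∑ j ∈ Icc m n, b j := by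
  induction n, hmn using Nat.le_induction with
  | base => simp
  | succ n hmn ih =>
    rw [sum_Icc_succ_top (by omega), ih, sum_Ico_succ_top hmn, sum_Icc_succ_top (by omega)]
    ring

theorem abs_sum_Icc_mul_le (a b : ℕ → ℝ) {m n : ℕ} (hmn : m ≤ n) {B : ℝ}
    (hB : ∀ k, m ≤ k → k ≤ n → |∑ j ∈ Icc m k, b j| ≤ B) :
    |∑ k ∈ Icc m n, a k * b k| ≤ (∑ k ∈ Ico m n, |a k - a (k + 1)| + |a n|) * B := by
  rw [sum_Icc_mul_eq_sum_Ico_sub_mul_add a b hmn, add_mul, sum_mul]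
  refine (abs_add_le _ _).trans (add_le_add ((abs_sum_le_sum_abs _ _).trans ?_) ?_)
  · refine sum_le_sum fun k hk => ?_
    rw [mem_Ico] at hk
    rw [abs_mul]
    exact mul_le_mul_of_nonneg_left (hB k hk.1 hk.2.le) (abs_nonneg _)
  · rw [abs_mul]
    exact mul_le_mul_of_nonneg_left (hB n hmn le_rfl) (abs_nonneg _)

theorem le_add_sum_Ico_abs_sub (a : ℕ → ℝ) {j N : ℕ} (hjN : j ≤ N) :
    a N ≤ a j + ∑ k ∈ Ico j N, |a k - a (k + 1)| := by
  induction N, hjN using Nat.le_induction with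
  | base => simp
  | succ N hjN ih =>
    rw [sum_Ico_succ_top hjN]
    linarith [neg_abs_le (a N - a (N + 1))]

theorem card_mul_le_sum_Icc_add (a : ℕ → ℝ) {m τ N : ℕ} (hτN : τ ≤ N) :
    ((τ + 1 - m : ℕ) : ℝ) * a N ≤
      ∑ j ∈ Icc m τ, a j + ((τ + 1 - m : ℕ) : ℝ) * ∑ k ∈ Ico m N, |a k - a (k + 1)| := by
  have hj : ∀ j ∈ Icc m τ, a N ≤ a j + ∑ k ∈ Ico m N, |a k - a (k + 1)| := by
    intro j hj
    rw [mem_Icc] at hj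
    have hsub : ∑ k ∈ Ico j N, |a k - a (k + 1)| ≤ ∑ k ∈ Ico m N, |a k - a (k + 1)| :=
      sum_le_sum_of_subset_of_nonneg (Ico_subset_Ico_left hj.1) fun _ _ _ => abs_nonneg _
    linarith [le_add_sum_Ico_abs_sub a (hj.2.trans hτN)]
  have := sum_le_sum hj
  rwa [sum_const, sum_add_distrib, sum_const, Nat.card_Icc, nsmul_eq_mul, nsmul_eq_mul] at this

theorem abs_sum_Icc_mul_dirichletKernel_le (a : ℕ → ℝ) {t : ℝ} (ht₀ : 0 < t) (htπ : t ≤ π)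
    {m n : ℕ} (hmn : m ≤ n) :
    |∑ k ∈ Icc m n, a k * dirichletKernel k t| ≤
      (∑ k ∈ Ico m n, |a k - a (k + 1)| + |a n|) * (π ^ 2 / (2 * t ^ 2)) :=
  abs_sum_Icc_mul_le a _ hmn fun _ hmk _ => abs_sum_Icc_dirichletKernel_le ht₀ htπ hmk

end Variation

section MRBVS

variable {K : ℝ} {n : ℕ} {a : ℕ → ℝ}

theorem IsMRBVS.sum_Ico_abs_sub_le (hMR : IsMRBVS K n a) (hK : 0 ≤ K) {m τ : ℕ} (hmn : m < n)
    (hmτ : m ≤ τ) (ha : ∀ k ≤ τ, 0 ≤ a k) :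
    ∑ k ∈ Ico m n, |a k - a (k + 1)| ≤ K / (m + 1) * ∑ k ∈ range (τ + 1), a k := by
  refine (hMR m hmn).trans (mul_le_mul_of_nonneg_left ?_ (by positivity))
  refine sum_le_sum_of_subset_of_nonneg (fun k hk => ?_) fun k hk _ => ?_
  · rw [mem_Icc] at hk
    rw [mem_range]
    omega
  · exact ha k (Nat.lt_succ_iff.mp (mem_range.mp hk))

/-- The MRBVS condition is applied at `m = τ / 2 + 1`, where its right-hand side only involves
`a_k` with `k ≤ τ`; the tail beyond `τ` is reached from there by averaging over `[m, τ]`. -/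
theorem IsMRBVS.sum_Ico_abs_sub_add_le (hMR : IsMRBVS K n a) (hK : 0 ≤ K) {τ : ℕ} (hτ : 1 ≤ τ)
    (hτn : τ < n) (ha : ∀ k ≤ τ, 0 ≤ a k) :
    ∑ k ∈ Ico (τ + 1) n, |a k - a (k + 1)| + a n ≤
      (6 * K + 4) / (τ + 2) * ∑ k ∈ range (τ + 1), a k := by
  set A := ∑ k ∈ range (τ + 1), a k
  set m := τ / 2 + 1
  set V := ∑ k ∈ Ico m n, |a k - a (k + 1)|
  set c := ((τ + 1 - m : ℕ) : ℝ)
  have hτ₂ : (0 : ℝ) < τ + 2 := by positivity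
  have hc : (τ + 2 : ℝ) ≤ 4 * c := by
    simp only [c]
    exact_mod_cast (show τ + 2 ≤ 4 * (τ + 1 - m) by omega)
  have hV : V ≤ 2 * K / (τ + 2) * A := by
    have hm : (τ + 2 : ℝ) ≤ 2 * (m + 1) := by exact_mod_cast (show τ + 2 ≤ 2 * (m + 1) by omega)
    refine (hMR.sum_Ico_abs_sub_le hK (by omega) (by omega) ha).trans
      (mul_le_mul_of_nonneg_right ?_ (sum_nonneg fun k hk => ha k (by simp at hk; omega)))
    rw [div_le_div_iff₀ (by positivity) hτ₂]
    nlinarith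
  have hVτ : ∑ k ∈ Ico (τ + 1) n, |a k - a (k + 1)| ≤ V :=
    sum_le_sum_of_subset_of_nonneg (Ico_subset_Ico_left (by omega)) fun _ _ _ => abs_nonneg _
  have han : a n ≤ a (τ + 1) + ∑ k ∈ Ico (τ + 1) n, |a k - a (k + 1)| :=
    le_add_sum_Ico_abs_sub a hτn
  have haτ : a (τ + 1) ≤ 4 / (τ + 2) * A + V := by
    have havg : c * a (τ + 1) ≤ A + c * V := by
      refine (card_mul_le_sum_Icc_add a (Nat.le_succ τ)).trans ?_
      gcongr
      · exact sum_le_sum_of_subset_of_nonneg (fun k hk => by simp at hk ⊢; omega)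
          fun k hk _ => ha k (by simp at hk; omega)
      · exact sum_le_sum_of_subset_of_nonneg (Ico_subset_Ico_right hτn) fun _ _ _ => abs_nonneg _
    have hA : 0 ≤ A := sum_nonneg fun k hk => ha k (by simp at hk; omega)
    have hc₀ : 0 < c := by linarith
    rw [div_mul_eq_mul_div, ← sub_le_iff_le_add, div_eq_mul_inv, le_mul_inv_iff₀ hτ₂]
    nlinarith
  calc ∑ k ∈ Ico (τ + 1) n, |a k - a (k + 1)| + a n ≤ 3 * V + 4 / (τ + 2) * A := by linarith
    _ ≤ 3 * (2 * K / (τ + 2) * A) + 4 / (τ + 2) * A := by gcongr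
    _ = (6 * K + 4) / (τ + 2) * A := by ring

theorem IsMRBVS.abs_sum_mul_dirichletKernel_le (hMR : IsMRBVS K n a) (hK : 0 ≤ K)
    (ha : ∀ k ≤ n, 0 ≤ a k) {t : ℝ} (ht₀ : 0 < t) (htπ : t ≤ π) {τ : ℕ} (hτ : 1 ≤ τ)
    (hτn : τ < n) :
    |∑ k ∈ range (n + 1), a k * dirichletKernel k t| ≤
      (1 / 2 + τ) * ∑ k ∈ range (τ + 1), a k +
        (6 * K + 4) / (τ + 2) * (π ^ 2 / (2 * t ^ 2)) * ∑ k ∈ range (τ + 1), a k := by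
  have haτ : ∀ k ≤ τ, 0 ≤ a k := fun k hk => ha k (by omega)
  rw [← sum_range_add_sum_Ico _ (by omega : τ + 1 ≤ n + 1), Ico_add_one_right_eq_Icc]
  refine (abs_add_le _ _).trans (add_le_add (abs_sum_range_mul_dirichletKernel_le haτ t) ?_)
  refine (abs_sum_Icc_mul_dirichletKernel_le a ht₀ htπ hτn).trans ?_
  rw [abs_of_nonneg (ha n le_rfl), mul_right_comm]
  gcongr
  exact hMR.sum_Ico_abs_sub_add_le hK hτ hτn haτ

end MRBVS

section FloorPiDiv

variable {t : ℝ}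

theorem one_le_floor_pi_div (ht₀ : 0 < t) (htπ : t ≤ π) : 1 ≤ ⌊π / t⌋₊ :=
  Nat.le_floor (by rw [Nat.cast_one, one_le_div ht₀]; exact htπ)

theorem floor_pi_div_lt {n : ℕ} (hn : 0 < n) (htn : 2 * π / n ≤ t) : ⌊π / t⌋₊ < n := by
  have hn₀ : (0 : ℝ) < n := by exact_mod_cast hn
  have ht₀ : 0 < t := lt_of_lt_of_le (by positivity) htn
  have hπt : π / t ≤ n / 2 := by
    rw [div_le_div_iff₀ ht₀ two_pos]
    rw [div_le_iff₀ hn₀] at htn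
    linarith
  have : (⌊π / t⌋₊ : ℝ) < n := by linarith [Nat.floor_le (div_pos pi_pos ht₀).le]
  exact_mod_cast this

theorem one_half_add_floor_pi_div_le (ht₀ : 0 < t) (htπ : t ≤ π) :
    1 / 2 + (⌊π / t⌋₊ : ℝ) ≤ 3 * π / 2 * t⁻¹ := by
  rw [← div_eq_mul_inv, le_div_iff₀ ht₀]
  nlinarith [(le_div_iff₀ ht₀).mp (Nat.floor_le (div_pos pi_pos ht₀).le)]

theorem div_floor_pi_div_add_two_mul_le (ht₀ : 0 < t) {c : ℝ} (hc : 0 ≤ c) :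
    c / (⌊π / t⌋₊ + 2) * (π ^ 2 / (2 * t ^ 2)) ≤ π * (c / 2) * t⁻¹ := by
  have h : 1 / ((⌊π / t⌋₊ : ℝ) + 2) ≤ t / π := by
    rw [div_le_div_iff₀ (by positivity) pi_pos]
    nlinarith [(div_lt_iff₀ ht₀).mp (Nat.lt_floor_add_one (π / t))]
  calc c / (⌊π / t⌋₊ + 2) * (π ^ 2 / (2 * t ^ 2))
      = c * (1 / (⌊π / t⌋₊ + 2)) * (π ^ 2 / (2 * t ^ 2)) := by ring
    _ ≤ c * (t / π) * (π ^ 2 / (2 * t ^ 2)) := by gcongr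
    _ = π * (c / 2) * t⁻¹ := by field_simp

end FloorPiDiv

/-- Lemma 2 (MRBVS case): for `2π/n ≤ t ≤ π` and an MRBVS row `(a k)`,
`|∑_{k=0}^n a_k D_k(t)| ≤ C · t⁻¹ · A_{n,τ}` with `τ = ⌊π/t⌋`. -/
theorem dirichlet_mean_bound_mrbvs (K : ℝ) (hK : 0 ≤ K) :
    ∃ C : ℝ, ∀ (n : ℕ) (a : ℕ → ℝ) (t : ℝ), 2 ≤ n →
      (∀ k ≤ n, 0 ≤ a k) →
      (∀ m : ℕ, m < n →
        ∑ k ∈ Finset.Ico m n, |a k - a (k + 1)| ≤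
          K / (m + 1) * ∑ k ∈ Finset.Icc ((m + 1) / 2) m, a k) →
      2 * π / n ≤ t → t ≤ π →
      |∑ k ∈ Finset.range (n + 1),
          a k * (1 / 2 + ∑ ν ∈ Finset.Icc 1 k, Real.cos (ν * t))| ≤
        C * t⁻¹ * ∑ k ∈ Finset.range (⌊π / t⌋₊ + 1), a k := by
  refine ⟨π * (3 * K + 7 / 2), fun n a t hn ha hMR htn htπ => ?_⟩
  have ht₀ : 0 < t := lt_of_lt_of_le (by positivity) htn
  have hA : 0 ≤ ∑ k ∈ range (⌊π / t⌋₊ + 1), a k :=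
    sum_nonneg fun k hk => ha k (by
      have := floor_pi_div_lt (by omega) htn
      rw [mem_range] at hk
      omega)
  calc _ ≤ _ := IsMRBVS.abs_sum_mul_dirichletKernel_le hMR hK ha ht₀ htπ
        (one_le_floor_pi_div ht₀ htπ) (floor_pi_div_lt (by omega) htn)
    _ ≤ 3 * π / 2 * t⁻¹ * ∑ k ∈ range (⌊π / t⌋₊ + 1), a k +
          π * ((6 * K + 4) / 2) * t⁻¹ * ∑ k ∈ range (⌊π / t⌋₊ + 1), a k :=
        add_le_add (mul_le_mul_of_nonneg_right (one_half_add_floor_pi_div_le ht₀ htπ) hA)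
          (mul_le_mul_of_nonneg_right (div_floor_pi_div_add_two_mul_le ht₀ (by positivity)) hA)
    _ = π * (3 * K + 7 / 2) * t⁻¹ * ∑ k ∈ range (⌊π / t⌋₊ + 1), a k := by ring
end

section
/- For nonnegative reals a_0, ..., a_n and t ∈ (0, π], with τ = ⌊π/t⌋ ≥ 2 and τ ≤ n, we have |∑_{k=0}^n a_k sin((2k+1)t/2) sin(t/2)| ≤ t·Ā_{n,n-τ} + ∑_{k=0}^{n-τ-1} |a_k - a_{k+1}| + 2 a_{n-τ}, where Ā_{n,m} = ∑_{k=m}^n a_k. -/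
open Real Finset

lemma bsum_eq (t : ℝ) (j : ℕ) :
    ∑ k ∈ Finset.range j, Real.sin ((2 * k + 1) * t / 2) * Real.sin (t / 2)
      = (1 - Real.cos (j * t)) / 2 := by
  induction j with
  | zero => simp
  | succ j ih =>
    rw [Finset.sum_range_succ, ih]
    have h : Real.cos (j * t) - Real.cos ((j + 1 : ℕ) * t)
        = 2 * Real.sin ((2 * j + 1) * t / 2) * Real.sin (t / 2) := by
      rw [Real.cos_sub_cos]
      push_cast
      rw [show ((j:ℝ) * t + (j + 1) * t) / 2 = (2 * j + 1) * t / 2 by ring,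
        show ((j:ℝ) * t - (j + 1) * t) / 2 = -(t / 2) by ring, Real.sin_neg]
      ring
    push_cast at h ⊢
    linarith

lemma bsum_abs (t : ℝ) (j : ℕ) :
    |∑ k ∈ Finset.range j, Real.sin ((2 * k + 1) * t / 2) * Real.sin (t / 2)| ≤ 1 := by
  rw [bsum_eq]
  have h1 := Real.neg_one_le_cos ((j : ℝ) * t)
  have h2 := Real.cos_le_one ((j : ℝ) * t)
  rw [abs_le]; constructor <;> linarith

/-- Tail partial-summation estimate, splitting the sum at index `n - τ`. -/
theorem abel_summation_tail_estimate (n : ℕ) (a : ℕ → ℝ) (hpos : ∀ k ≤ n, 0 ≤ a k)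
    (t : ℝ) (ht0 : 0 < t) (htπ : t ≤ π)
    (hτ2 : 2 ≤ ⌊π / t⌋₊) (hτn : ⌊π / t⌋₊ ≤ n) :
    |∑ k ∈ Finset.range (n + 1), a k * Real.sin ((2 * k + 1) * t / 2) * Real.sin (t / 2)| ≤
      t * ∑ k ∈ Finset.Icc (n - ⌊π / t⌋₊) n, a k +
        ∑ k ∈ Finset.range (n - ⌊π / t⌋₊), |a k - a (k + 1)| +
        2 * a (n - ⌊π / t⌋₊) := by
  set τ := ⌊π / t⌋₊ with hτdef
  set m := n - τ with hmdef
  set b : ℕ → ℝ := fun k => Real.sin ((2 * k + 1) * t / 2) * Real.sin (t / 2) with hb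
  have hmn : m ≤ n := Nat.sub_le _ _
  have ham : 0 ≤ a m := hpos m hmn
  -- split the sum
  have hsplit : ∑ k ∈ Finset.range (n + 1), a k * b k
      = (∑ k ∈ Finset.range m, a k * b k) + ∑ k ∈ Finset.Icc m n, a k * b k := by
    rw [Finset.range_eq_Ico, ← Finset.sum_Ico_consecutive _ (Nat.zero_le m)
      (by omega : m ≤ n + 1), ← Finset.range_eq_Ico, Finset.Ico_add_one_right_eq_Icc]
  -- bound for the tail part
  have htail : |∑ k ∈ Finset.Icc m n, a k * b k| ≤ t * ∑ k ∈ Finset.Icc m n, a k := by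
    calc |∑ k ∈ Finset.Icc m n, a k * b k| ≤ ∑ k ∈ Finset.Icc m n, |a k * b k| :=
          Finset.abs_sum_le_sum_abs _ _
      _ ≤ ∑ k ∈ Finset.Icc m n, t * a k := by
          apply Finset.sum_le_sum
          intro k hk
          have hk' : k ≤ n := (Finset.mem_Icc.mp hk).2
          have hak := hpos k hk'
          have hs1 : |Real.sin ((2 * k + 1) * t / 2)| ≤ 1 := Real.abs_sin_le_one _
          have hs2 : |Real.sin (t / 2)| ≤ t / 2 := by
            rw [abs_le]
            constructor
            · have : 0 ≤ Real.sin (t / 2) := Real.sin_nonneg_of_nonneg_of_le_pi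
                (by linarith) (by linarith [Real.pi_pos])
              linarith [hpos 0 (Nat.zero_le n)]
            · exact Real.sin_le (by linarith)
          have hb1 : |b k| ≤ t / 2 := by
            rw [hb]
            simp only [abs_mul]
            calc |Real.sin ((2 * (k:ℝ) + 1) * t / 2)| * |Real.sin (t / 2)|
                ≤ 1 * (t / 2) := mul_le_mul hs1 hs2 (abs_nonneg _) zero_le_one
              _ = t / 2 := one_mul _
          rw [abs_mul, abs_of_nonneg hak]
          nlinarith [abs_nonneg (b k)]
      _ = t * ∑ k ∈ Finset.Icc m n, a k := by rw [Finset.mul_sum]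
  -- bound for the head part via Abel summation
  have hhead : |∑ k ∈ Finset.range m, a k * b k|
      ≤ ∑ k ∈ Finset.range m, |a k - a (k + 1)| + 2 * a m := by
    rcases Nat.eq_zero_or_pos m with hm0 | hm0
    · rw [hm0]
      simp only [Finset.range_zero, Finset.sum_empty, abs_zero]
      linarith [hpos 0 (Nat.zero_le n)]
    have habel := Finset.sum_range_by_parts a b m
    simp only [smul_eq_mul] at habel
    rw [habel]
    have hB : ∀ j, |∑ i ∈ Finset.range j, b i| ≤ 1 := fun j => bsum_abs t j
    have h1 : |a (m - 1) * ∑ i ∈ Finset.range m, b i| ≤ |a (m - 1)| := by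
      rw [abs_mul]
      calc |a (m-1)| * |∑ i ∈ Finset.range m, b i| ≤ |a (m-1)| * 1 :=
            mul_le_mul_of_nonneg_left (hB m) (abs_nonneg _)
        _ = |a (m-1)| := mul_one _
    have h2 : |∑ i ∈ Finset.range (m - 1), (a (i + 1) - a i) * ∑ j ∈ Finset.range (i+1), b j|
        ≤ ∑ i ∈ Finset.range (m - 1), |a i - a (i + 1)| := by
      calc _ ≤ ∑ i ∈ Finset.range (m - 1),
              |(a (i + 1) - a i) * ∑ j ∈ Finset.range (i+1), b j| :=
            Finset.abs_sum_le_sum_abs _ _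
        _ ≤ ∑ i ∈ Finset.range (m - 1), |a i - a (i + 1)| := by
            apply Finset.sum_le_sum
            intro i _
            rw [abs_mul, abs_sub_comm]
            calc |a i - a (i+1)| * |∑ j ∈ Finset.range (i+1), b j|
                ≤ |a i - a (i+1)| * 1 :=
                  mul_le_mul_of_nonneg_left (hB (i+1)) (abs_nonneg _)
              _ = _ := mul_one _
    have h3 : |a (m - 1)| ≤ |a (m - 1) - a m| + a m := by
      have := abs_sub_abs_le_abs_sub (a (m-1)) (a m)
      rw [abs_of_nonneg ham] at this
      linarith [abs_nonneg (a (m-1) - a m), le_abs_self (a (m-1))]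
    have hrange : ∑ k ∈ Finset.range m, |a k - a (k + 1)|
        = ∑ k ∈ Finset.range (m - 1), |a k - a (k + 1)| + |a (m-1) - a m| := by
      have : m = (m - 1) + 1 := by omega
      rw [this, Finset.sum_range_succ]
      congr 2 <;> omega
    calc |a (m - 1) * ∑ i ∈ Finset.range m, b i
          - ∑ i ∈ Finset.range (m - 1), (a (i + 1) - a i) * ∑ j ∈ Finset.range (i+1), b j|
        ≤ |a (m - 1) * ∑ i ∈ Finset.range m, b i|
          + |∑ i ∈ Finset.range (m - 1), (a (i + 1) - a i) * ∑ j ∈ Finset.range (i+1), b j| :=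
          abs_sub _ _
      _ ≤ (|a (m-1) - a m| + a m) + ∑ i ∈ Finset.range (m - 1), |a i - a (i + 1)| := by
          linarith [h1, h2, h3]
      _ ≤ ∑ k ∈ Finset.range m, |a k - a (k + 1)| + 2 * a m := by
          rw [hrange]; linarith
  have hrw : ∀ x ∈ Finset.range (n+1), a x * Real.sin ((2 * x + 1) * t / 2) * Real.sin (t / 2)
      = a x * b x := fun x _ => by rw [hb]; ring
  rw [Finset.sum_congr rfl hrw]
  calc |∑ k ∈ Finset.range (n + 1), a k * b k|
      ≤ |∑ k ∈ Finset.range m, a k * b k| + |∑ k ∈ Finset.Icc m n, a k * b k| := by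
        rw [hsplit]; exact abs_add_le _ _
    _ ≤ (∑ k ∈ Finset.range m, |a k - a (k + 1)| + 2 * a m)
        + t * ∑ k ∈ Finset.Icc m n, a k := add_le_add hhead htail
    _ = _ := by ring
end
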